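/- arXiv:cs/0601127 — 2 statements merged into one kernel-verified Lean document; each statement's English description precedes it below -/
import Mathlib

section
/- Let n₁, n₂, n₃, n₄ be reals, each at least 16, such that n₁ = min{n₁, n₂, n₃, n₄} and n₃ ≤ n₄. Then log₂ n₃ + log₂( n₂·n₄ / ((n₁+n₂)(n₃+n₄)) ) ≥ (1/4) · [ log₂ n₃ + log₂ n₁ + log₂( n₂·n₄ / ((n₁+n₂)(n₃+n₄)) ) ]. -/
theorem stmt_4 (n₁ n₂ n₃ n₄ : ℝ)
    (h1 : 16 ≤ n₁) (h2 : 16 ≤ n₂) (h3 : 16 ≤ n₃) (h4 : 16 ≤ n₄)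
    (hmin : n₁ = min (min n₁ n₂) (min n₃ n₄)) (h34 : n₃ ≤ n₄) :
    Real.logb 2 n₃ + Real.logb 2 (n₂ * n₄ / ((n₁ + n₂) * (n₃ + n₄))) ≥
      (1 / 4) * (Real.logb 2 n₃ + Real.logb 2 n₁ +
        Real.logb 2 (n₂ * n₄ / ((n₁ + n₂) * (n₃ + n₄)))) := by
  have h12 : n₁ ≤ n₂ := by
    rw [hmin]; exact le_trans (min_le_left _ _) (min_le_right _ _)
  have h13 : n₁ ≤ n₃ := by
    rw [hmin]; exact le_trans (min_le_right _ _) (min_le_left _ _)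
  have hb : (1:ℝ) < 2 := one_lt_two
  have hL1 : (4:ℝ) ≤ Real.logb 2 n₁ := by
    have : Real.logb 2 16 ≤ Real.logb 2 n₁ := Real.logb_le_logb_of_le one_lt_two (by norm_num) h1
    have h16 : Real.logb 2 16 = 4 := by
      rw [show (16:ℝ) = (2:ℝ)^(4:ℝ) by rw [show (4:ℝ)=((4:ℕ):ℝ) by norm_num, Real.rpow_natCast]; norm_num,
        Real.logb_rpow (by norm_num) (by norm_num)]
    linarith
  have hL31 : Real.logb 2 n₁ ≤ Real.logb 2 n₃ := Real.logb_le_logb_of_le one_lt_two (by linarith) h13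
  have hratio : (1/4 : ℝ) ≤ n₂ * n₄ / ((n₁ + n₂) * (n₃ + n₄)) := by
    rw [le_div_iff₀ (by nlinarith)]
    nlinarith
  have hL : Real.logb 2 (1/4) ≤ Real.logb 2 (n₂ * n₄ / ((n₁ + n₂) * (n₃ + n₄))) :=
    Real.logb_le_logb_of_le one_lt_two (by norm_num) hratio
  have hq : Real.logb 2 (1/4 : ℝ) = -2 := by
    rw [show (1/4 : ℝ) = (2:ℝ)^(-2 : ℝ) by
      rw [Real.rpow_neg (by norm_num)]; norm_num, Real.logb_rpow (by norm_num) (by norm_num)]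
  rw [hq] at hL
  linarith
end

section
/- Let n₁, n₂, n₃ be reals with nᵢ ≥ 16 for all i, n₁ ≤ n₃, and n₂ ≥ (n₁ + n₂ + n₃)^{1/4}. Then log₂( n₂·n₃ / (n₁+n₂+n₃) ) ≥ (1/10)·log₂( n₁·n₂·n₃ / (n₁+n₂+n₃) ). -/
theorem stmt_6 (n₁ n₂ n₃ : ℝ)
    (h1 : 16 ≤ n₁) (h2 : 16 ≤ n₂) (h3 : 16 ≤ n₃) (h13 : n₁ ≤ n₃)
    (hq : n₂ ≥ (n₁ + n₂ + n₃) ^ ((1 : ℝ) / 4)) :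
    Real.logb 2 (n₂ * n₃ / (n₁ + n₂ + n₃)) ≥
      (1 / 10) * Real.logb 2 (n₁ * n₂ * n₃ / (n₁ + n₂ + n₃)) := by
  have hS : (0:ℝ) < n₁ + n₂ + n₃ := by linarith
  have hp1 : (0:ℝ) < n₁ := by linarith
  have hp2 : (0:ℝ) < n₂ := by linarith
  have hp3 : (0:ℝ) < n₃ := by linarith
  have h16 : Real.logb 2 (16:ℝ) = 4 := by
    have e : (16:ℝ) = 2 ^ (4:ℕ) := by norm_num
    rw [e, Real.logb_pow, Real.logb_self_eq_one (by norm_num)]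
    norm_num
  have hL2a : (4:ℝ) ≤ Real.logb 2 n₂ := by
    rw [← h16]; exact Real.logb_le_logb_of_le (by norm_num) (by norm_num) h2
  have hL3a : (4:ℝ) ≤ Real.logb 2 n₃ := by
    rw [← h16]; exact Real.logb_le_logb_of_le (by norm_num) (by norm_num) h3
  have hL13 : Real.logb 2 n₁ ≤ Real.logb 2 n₃ :=
    Real.logb_le_logb_of_le (by norm_num) hp1 h13
  have hL2b : Real.logb 2 (n₁ + n₂ + n₃) / 4 ≤ Real.logb 2 n₂ := by
    have e : Real.logb 2 ((n₁ + n₂ + n₃) ^ ((1:ℝ)/4)) =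
        Real.logb 2 (n₁ + n₂ + n₃) / 4 := by
      unfold Real.logb
      rw [Real.log_rpow hS]
      ring
    have h := Real.logb_le_logb_of_le (b := 2) (by norm_num) (by positivity) hq
    rw [e] at h
    exact h
  have hlog3 : Real.logb 2 (3:ℝ) ≤ 2 := by
    have h34 : Real.logb 2 (3:ℝ) ≤ Real.logb 2 (4:ℝ) :=
      Real.logb_le_logb_of_le (by norm_num) (by norm_num) (by norm_num)
    have h4 : Real.logb 2 (4:ℝ) = 2 := by
      have e : (4:ℝ) = 2 ^ (2:ℕ) := by norm_num
      rw [e, Real.logb_pow, Real.logb_self_eq_one (by norm_num)]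
      norm_num
    linarith
  have hkey : 9 * Real.logb 2 (n₁ + n₂ + n₃) ≤
      9 * Real.logb 2 n₂ + 8 * Real.logb 2 n₃ := by
    rcases le_total n₃ n₂ with hc | hc
    · have hS3 : (n₁ + n₂ + n₃) / 3 ≤ n₂ := by linarith
      have h := Real.logb_le_logb_of_le (b := 2) (by norm_num) (by positivity) hS3
      rw [Real.logb_div (ne_of_gt hS) (by norm_num)] at h
      linarith
    · have hS3 : (n₁ + n₂ + n₃) / 3 ≤ n₃ := by linarith
      have h := Real.logb_le_logb_of_le (b := 2) (by norm_num) (by positivity) hS3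
      rw [Real.logb_div (ne_of_gt hS) (by norm_num)] at h
      linarith
  have e1 : Real.logb 2 (n₂ * n₃ / (n₁ + n₂ + n₃)) =
      Real.logb 2 n₂ + Real.logb 2 n₃ - Real.logb 2 (n₁ + n₂ + n₃) := by
    rw [Real.logb_div (by positivity) (ne_of_gt hS),
      Real.logb_mul (ne_of_gt hp2) (ne_of_gt hp3)]
  have e2 : Real.logb 2 (n₁ * n₂ * n₃ / (n₁ + n₂ + n₃)) =
      Real.logb 2 n₁ + Real.logb 2 n₂ + Real.logb 2 n₃ -
        Real.logb 2 (n₁ + n₂ + n₃) := by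
    rw [Real.logb_div (by positivity) (ne_of_gt hS),
      Real.logb_mul (by positivity) (ne_of_gt hp3),
      Real.logb_mul (ne_of_gt hp1) (ne_of_gt hp2)]
  rw [ge_iff_le, e1, e2]
  linarith
end
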